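/- arXiv:2106.11753 — 2 statements merged into one kernel-verified Lean document; each statement's English description precedes it below -/
import Mathlib

section
/- The symplectic Euler method defines a symplectic map: let Ω ⊆ ℝ^{2n} be open, H : ℝ^{2n} → ℝ be C², h ∈ ℝ, and let Ψ = (Ψ_p, Ψ_q) : Ω → ℝ^n × ℝ^n be a differentiable map satisfying, for all (p,q) ∈ Ω, Ψ_p(p,q) = p − h·∇_q H(Ψ_p(p,q), q) and Ψ_q(p,q) = q + h·∇_p H(Ψ_p(p,q), q). Then for every y ∈ Ω the Jacobian satisfies DΨ(y)ᵀ·J·DΨ(y) = J. -/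
open Matrix

noncomputable section

/-- Phase space ℝ^{2n}, with coordinates indexed by `Fin n ⊕ Fin n`
(`Sum.inl` = momentum coordinates `p`, `Sum.inr` = position coordinates `q`). -/
abbrev Phase (n : ℕ) := EuclideanSpace ℝ (Fin n ⊕ Fin n)

def toPhase {n : ℕ} (v : (Fin n ⊕ Fin n) → ℝ) : Phase n := WithLp.toLp 2 v

def ofPhase {n : ℕ} (y : Phase n) : (Fin n ⊕ Fin n) → ℝ := y

/-- The canonical symplectic matrix `J = [[0, I], [-I, 0]]`. -/
def J (n : ℕ) : Matrix (Fin n ⊕ Fin n) (Fin n ⊕ Fin n) ℝ :=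
  Matrix.fromBlocks 0 1 (-1) 0

/-- The symplectic gradient (Hamiltonian vector field) `J⁻¹ ∇H`. -/
def sympGrad {n : ℕ} (H : Phase n → ℝ) (y : Phase n) : Phase n :=
  toPhase ((J n)⁻¹.mulVec (ofPhase (gradient H y)))

/-- The Jacobian matrix of a map on phase space. -/
def jacMatrix {n : ℕ} (f : Phase n → Phase n) (y : Phase n) :
    Matrix (Fin n ⊕ Fin n) (Fin n ⊕ Fin n) ℝ :=
  Matrix.of fun i j => ofPhase (fderiv ℝ f y (EuclideanSpace.single j 1)) i

/-- The mixed evaluation point `(Ψ_p(y), q)` of the symplectic Euler method. -/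
def mixedPoint {n : ℕ} (Ψ : Phase n → Phase n) (y : Phase n) : Phase n :=
  toPhase (Sum.elim (fun i => Ψ y (Sum.inl i)) (fun i => y (Sum.inr i)))

/-!
Differentiating the defining relations, the Jacobian `S = DΨ(y)` satisfies
`S = 1 + J' G M`, where `J' = -J` is Mathlib's `Matrix.J`, `G = h ∇²H` at the mixed point is
symmetric, and `M = P S + Q` is the Jacobian of the mixed point map (`P`, `Q` the projections onto
the `p`- and `q`-coordinates). Eliminating `S` gives `(1 - P J' G) M = 1` and
`S = (1 + Q J' G) M`, and for symmetric `G` a block computation gives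
`(1 + Q J' G)ᵀ J' (1 + Q J' G) = (1 - P J' G)ᵀ J' (1 - P J' G)`. Hence
`Sᵀ J' S = ((1 - P J' G) M)ᵀ J' ((1 - P J' G) M) = J'`.
-/

namespace Matrix

variable {l R : Type*} [DecidableEq l] [Fintype l] [CommRing R]

theorem transpose_mul_J_mul_of_isSymm (G : Matrix (l ⊕ l) (l ⊕ l) R) (hG : G.IsSymm) :
    (1 + fromBlocks 0 0 0 1 * J l R * G)ᵀ * J l R * (1 + fromBlocks 0 0 0 1 * J l R * G) =
      (1 - fromBlocks 1 0 0 0 * J l R * G)ᵀ * J l R * (1 - fromBlocks 1 0 0 0 * J l R * G) := by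
  rw [IsSymm, ← fromBlocks_toBlocks G, fromBlocks_transpose, fromBlocks_inj] at hG
  obtain ⟨h₁₁, h₂₁, h₁₂, h₂₂⟩ := hG
  rw [← fromBlocks_toBlocks G]
  simp [J, ← fromBlocks_one, fromBlocks_transpose, fromBlocks_multiply, fromBlocks_add,
    sub_eq_add_neg, fromBlocks_neg, h₁₁, h₁₂, h₂₁, h₂₂]

theorem mem_symplecticGroup_of_eq_one_add (S G : Matrix (l ⊕ l) (l ⊕ l) R) (hG : G.IsSymm)
    (hS : S = 1 + J l R * G * (fromBlocks 1 0 0 0 * S + fromBlocks 0 0 0 1)) :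
    S ∈ symplecticGroup l R := by
  set P : Matrix (l ⊕ l) (l ⊕ l) R := fromBlocks 1 0 0 0
  set Q : Matrix (l ⊕ l) (l ⊕ l) R := fromBlocks 0 0 0 1
  set M := P * S + Q with hMdef
  have hPQ : P + Q = 1 := by simp [P, Q, fromBlocks_add]
  have hJGM : J l R * G * M = S - 1 := by rw [hS]; abel
  have hM : (1 - P * J l R * G) * M = 1 := by
    rw [sub_mul, one_mul, Matrix.mul_assoc, Matrix.mul_assoc, ← Matrix.mul_assoc _ G, hJGM,
      Matrix.mul_sub, Matrix.mul_one, hMdef, ← hPQ]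
    abel
  have hSM : S = (1 + Q * J l R * G) * M := by
    rw [add_mul, one_mul, Matrix.mul_assoc, Matrix.mul_assoc, ← Matrix.mul_assoc _ G, hJGM]
    conv_lhs => rw [← Matrix.one_mul S, ← hPQ]
    rw [Matrix.add_mul, Matrix.mul_sub, Matrix.mul_one, hMdef]
    abel
  rw [SymplecticGroup.mem_iff', hSM]
  calc ((1 + Q * J l R * G) * M)ᵀ * J l R * ((1 + Q * J l R * G) * M)
      = Mᵀ * ((1 + Q * J l R * G)ᵀ * J l R * (1 + Q * J l R * G)) * M := by
        simp only [transpose_mul, Matrix.mul_assoc]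
    _ = ((1 - P * J l R * G) * M)ᵀ * J l R * ((1 - P * J l R * G) * M) := by
        rw [transpose_mul_J_mul_of_isSymm G hG]
        simp only [transpose_mul, Matrix.mul_assoc]
        rfl
    _ = J l R := by simp [hM]

end Matrix

open InnerProductSpace Filter Topology

theorem hasFDerivAt_gradient {E : Type*} [NormedAddCommGroup E] [InnerProductSpace ℝ E]
    [CompleteSpace E] {H : E → ℝ} {x : E} (hd : DifferentiableAt ℝ (fderiv ℝ H) x) :
    HasFDerivAt (gradient H) ((toDual ℝ E).symm.toContinuousLinearEquiv.toContinuousLinearMap ∘L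
      fderiv ℝ (fderiv ℝ H) x) x :=
  (toDual ℝ E).symm.hasFDerivAt.comp x hd.hasFDerivAt

section PhaseSpace

variable {n : ℕ}

theorem toEuclideanCLM_jacMatrix (f : Phase n → Phase n) (y : Phase n) :
    toEuclideanCLM (𝕜 := ℝ) (jacMatrix f y) = fderiv ℝ f y := by
  apply ContinuousLinearMap.coe_injective
  refine (EuclideanSpace.basisFun _ ℝ).toBasis.ext fun j => ?_
  ext i
  simp [jacMatrix, ofPhase]

theorem hasFDerivAt_jacMatrix {f : Phase n → Phase n} {y : Phase n}
    (hf : DifferentiableAt ℝ f y) :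
    HasFDerivAt f (toEuclideanCLM (𝕜 := ℝ) (jacMatrix f y)) y := by
  rw [toEuclideanCLM_jacMatrix]
  exact hf.hasFDerivAt

theorem jacMatrix_eq_of_hasFDerivAt {f : Phase n → Phase n} {y : Phase n} {A : Matrix _ _ ℝ}
    (hf : HasFDerivAt f (toEuclideanCLM (𝕜 := ℝ) A) y) : jacMatrix f y = A :=
  toEuclideanCLM.injective ((toEuclideanCLM_jacMatrix f y).trans hf.fderiv)

theorem jacMatrix_gradient_isSymm {H : Phase n → ℝ} {x : Phase n} (hH : ContDiffAt ℝ 2 H x) :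
    (jacMatrix (gradient H) x).IsSymm := by
  have hd : DifferentiableAt ℝ (fderiv ℝ H) x :=
    (hH.fderiv_right (m := 1) (by norm_num)).differentiableAt one_ne_zero
  have hentry : ∀ i j, jacMatrix (gradient H) x i j =
      fderiv ℝ (fderiv ℝ H) x (EuclideanSpace.single j 1) (EuclideanSpace.single i 1) := by
    intro i j
    rw [jacMatrix, (hasFDerivAt_gradient hd).fderiv]
    set φ := fderiv ℝ (fderiv ℝ H) x (EuclideanSpace.single j 1)
    calc ((toDual ℝ (Phase n)).symm φ) i
        = inner ℝ (EuclideanSpace.single i 1) ((toDual ℝ (Phase n)).symm φ) := by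
          simp [EuclideanSpace.inner_single_left]
      _ = φ (EuclideanSpace.single i 1) := by rw [real_inner_comm, toDual_symm_apply]
  ext i j
  rw [transpose_apply, hentry, hentry]
  exact hH.isSymmSndFDerivAt (by simp) _ _

theorem J_eq_neg_J : J n = -Matrix.J (Fin n) ℝ := by
  simp [_root_.J, Matrix.J, fromBlocks_neg]

theorem mixedPoint_eq (Ψ : Phase n → Phase n) :
    mixedPoint Ψ = fun x => toEuclideanCLM (𝕜 := ℝ) (fromBlocks 1 0 0 0) (Ψ x) +
      toEuclideanCLM (𝕜 := ℝ) (fromBlocks 0 0 0 1) x := by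
  ext x (i | i) <;> simp [mixedPoint, toPhase, fromBlocks_mulVec]

theorem eq_add_smul_J_gradient_mixedPoint {H : Phase n → ℝ} {h : ℝ} {Ψ : Phase n → Phase n}
    {y : Phase n}
    (hp : ∀ i, Ψ y (Sum.inl i) = y (Sum.inl i) - h * gradient H (mixedPoint Ψ y) (Sum.inr i))
    (hq : ∀ i, Ψ y (Sum.inr i) = y (Sum.inr i) + h * gradient H (mixedPoint Ψ y) (Sum.inl i)) :
    Ψ y = y + h • toEuclideanCLM (𝕜 := ℝ) (Matrix.J (Fin n) ℝ)
      (gradient H (mixedPoint Ψ y)) := by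
  ext (i | i) <;> simp [hp, hq, Matrix.J, fromBlocks_mulVec, neg_mulVec, sub_eq_add_neg]

theorem jacMatrix_eq_one_add_J_mul {H : Phase n → ℝ} {h : ℝ} {Ψ : Phase n → Phase n}
    {y : Phase n} (hΨ : Ψ =ᶠ[𝓝 y] fun x =>
      x + h • toEuclideanCLM (𝕜 := ℝ) (Matrix.J (Fin n) ℝ) (gradient H (mixedPoint Ψ x)))
    (hΨy : DifferentiableAt ℝ Ψ y)
    (hH : DifferentiableAt ℝ (fderiv ℝ H) (mixedPoint Ψ y)) :
    jacMatrix Ψ y = 1 + Matrix.J (Fin n) ℝ * (h • jacMatrix (gradient H) (mixedPoint Ψ y)) *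
      (fromBlocks 1 0 0 0 * jacMatrix Ψ y + fromBlocks 0 0 0 1) := by
  set T := toEuclideanCLM (n := Fin n ⊕ Fin n) (𝕜 := ℝ)
  have hS := hasFDerivAt_jacMatrix hΨy
  have hG := hasFDerivAt_jacMatrix (hasFDerivAt_gradient hH).differentiableAt
  have hM : HasFDerivAt (mixedPoint Ψ)
      (T (fromBlocks 1 0 0 0 * jacMatrix Ψ y + fromBlocks 0 0 0 1)) y := by
    rw [mixedPoint_eq, map_add, map_mul]
    exact ((T _).hasFDerivAt.comp y hS).add (T _).hasFDerivAt
  have hF : HasFDerivAt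
      (fun x => x + h • T (Matrix.J (Fin n) ℝ) (gradient H (mixedPoint Ψ x)))
      (ContinuousLinearMap.id ℝ _ + h • (T (Matrix.J (Fin n) ℝ) ∘L
        (T (jacMatrix (gradient H) (mixedPoint Ψ y)) ∘L
          T (fromBlocks 1 0 0 0 * jacMatrix Ψ y + fromBlocks 0 0 0 1)))) y :=
    (hasFDerivAt_id y).add (((T _).hasFDerivAt.comp y (hG.comp y hM)).const_smul h)
  refine jacMatrix_eq_of_hasFDerivAt ((hF.congr_fderiv ?_).congr_of_eventuallyEq hΨ)
  simp only [map_add, map_one, map_mul, map_smul, ContinuousLinearMap.one_def,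
    ContinuousLinearMap.mul_def, ContinuousLinearMap.comp_assoc,
    ContinuousLinearMap.smul_comp, ContinuousLinearMap.comp_smul]
  rfl

end PhaseSpace

/-- the symplectic Euler method defines a symplectic map: if
`Ψ = (Ψ_p, Ψ_q)` is differentiable on an open `Ω` and satisfies
`Ψ_p(p,q) = p − h·∇_qH(Ψ_p(p,q), q)` and `Ψ_q(p,q) = q + h·∇_pH(Ψ_p(p,q), q)` on `Ω`
for a C² Hamiltonian `H`, then `DΨ(y)ᵀ·J·DΨ(y) = J` on `Ω`. -/
theorem stmt16 (n : ℕ) (Ω : Set (Phase n)) (hΩ : IsOpen Ω)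
    (H : Phase n → ℝ) (hH : ContDiff ℝ 2 H) (h : ℝ)
    (Ψ : Phase n → Phase n) (hdiff : ∀ y ∈ Ω, DifferentiableAt ℝ Ψ y)
    (hp : ∀ y ∈ Ω, ∀ i : Fin n,
      Ψ y (Sum.inl i) =
        y (Sum.inl i) - h * gradient H (mixedPoint Ψ y) (Sum.inr i))
    (hq : ∀ y ∈ Ω, ∀ i : Fin n,
      Ψ y (Sum.inr i) =
        y (Sum.inr i) + h * gradient H (mixedPoint Ψ y) (Sum.inl i)) :
    ∀ y ∈ Ω, (jacMatrix Ψ y)ᵀ * J n * jacMatrix Ψ y = J n := by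
  intro y hy
  have hΨ : Ψ =ᶠ[𝓝 y] fun x => x + h • toEuclideanCLM (𝕜 := ℝ) (Matrix.J (Fin n) ℝ)
      (gradient H (mixedPoint Ψ x)) :=
    eventually_of_mem (hΩ.mem_nhds hy) fun x hx =>
      eq_add_smul_J_gradient_mixedPoint (hp x hx) (hq x hx)
  have hd : DifferentiableAt ℝ (fderiv ℝ H) (mixedPoint Ψ y) :=
    (hH.fderiv_right (m := 1) (by norm_num)).differentiable one_ne_zero _
  have hG := (jacMatrix_gradient_isSymm (hH.contDiffAt (x := mixedPoint Ψ y))).smul h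
  have hS := mem_symplecticGroup_of_eq_one_add _ _ hG
    (jacMatrix_eq_one_add_J_mul hΨ (hdiff y hy) hd)
  rw [SymplecticGroup.mem_iff'] at hS
  rw [J_eq_neg_J, Matrix.mul_neg, Matrix.neg_mul, hS]
end
end

section
/- The implicit midpoint rule defines a symplectic map: let Ω ⊆ ℝ^{2n} be open, H : ℝ^{2n} → ℝ be C², h ∈ ℝ, and let Ψ : Ω → ℝ^{2n} be a differentiable map satisfying Ψ(y) = y + h·J⁻¹∇H((y + Ψ(y))/2) for all y ∈ Ω. Then for every y ∈ Ω the Jacobian satisfies DΨ(y)ᵀ·J·DΨ(y) = J. -/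
open Matrix

noncomputable section

/-!
Differentiating the defining relation at `y` gives, for `A = DΨ(y)` and
`B = (h/2) J⁻¹ ∇²H(m)` with `m` the midpoint, the linear relation `A = I + B (I + A)`, i.e.
`(I - B) A = I + B`: the Jacobian is the Cayley transform of `B`. Since the Hessian is symmetric,
`B` is Hamiltonian, `Bᵀ J + J B = 0`, which says exactly that `(I + B)ᵀ J (I + B)` and
`(I - B)ᵀ J (I - B)` agree; as `I + B` commutes with `(I - B)⁻¹`, the Cayley transform is symplectic.
-/

open InnerProductSpace Topology

namespace Matrix

variable {ι R : Type*} [Fintype ι] [DecidableEq ι] [CommRing R]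

def IsHamiltonian (Jm B : Matrix ι ι R) : Prop :=
  Bᵀ * Jm + Jm * B = 0

theorem IsHamiltonian.transpose_mul_mul_self_of_cayley {Jm B A : Matrix ι ι R}
    (hB : IsHamiltonian Jm B) (hunit : IsUnit (1 - B)) (hA : (1 - B) * A = 1 + B) :
    Aᵀ * Jm * A = Jm := by
  obtain ⟨u, hu⟩ := hunit
  set C : Matrix ι ι R := ↑u⁻¹
  have hquad : (1 + B)ᵀ * Jm * (1 + B) = (1 - B)ᵀ * Jm * (1 - B) :=
    calc (1 + B)ᵀ * Jm * (1 + B) = (1 - B)ᵀ * Jm * (1 - B) + 2 • (Bᵀ * Jm + Jm * B) := by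
          simp only [transpose_add, transpose_sub, transpose_one]; noncomm_ring
      _ = (1 - B)ᵀ * Jm * (1 - B) := by rw [hB, smul_zero, add_zero]
  have hcomm : Commute C (1 + B) :=
    Commute.units_inv_left <| hu ▸ (by noncomm_ring : (1 - B) * (1 + B) = (1 + B) * (1 - B))
  have hA' : A = (1 + B) * C := by
    rw [← hcomm.eq, ← hA, ← hu, ← Matrix.mul_assoc, Units.inv_mul, Matrix.one_mul]
  calc Aᵀ * Jm * A = Cᵀ * ((1 + B)ᵀ * Jm * (1 + B)) * C := by
        rw [hA', transpose_mul]; simp only [Matrix.mul_assoc]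
    _ = ((1 - B) * C)ᵀ * Jm * ((1 - B) * C) := by
        rw [hquad, transpose_mul]; simp only [Matrix.mul_assoc]
    _ = Jm := by rw [← hu, Units.mul_inv, transpose_one, Matrix.one_mul, Matrix.mul_one]

theorem IsHamiltonian.transpose_mul_mul_self_of_implicit_midpoint [Invertible (2 : R)]
    {Jm B A : Matrix ι ι R} (hB : IsHamiltonian Jm B) (hA : A = 1 + B * (1 + A)) :
    Aᵀ * Jm * A = Jm := by
  have hA1 : A - B * (1 + A) = 1 := sub_eq_iff_eq_add'.mpr (hA.trans (add_comm _ _))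
  have htwo : (1 - B) * (1 + A) = 1 + 1 :=
    calc (1 - B) * (1 + A) = 1 + (A - B * (1 + A)) := by noncomm_ring
      _ = 1 + 1 := by rw [hA1]
  refine hB.transpose_mul_mul_self_of_cayley
    (IsUnit.of_mul_eq_one ((⅟2 : R) • (1 + A)) ?_) ?_
  · rw [Matrix.mul_smul, htwo, smul_add, ← add_smul, invOf_two_add_invOf_two, one_smul]
  · calc (1 - B) * A = (A - B * (1 + A)) + B := by noncomm_ring
      _ = 1 + B := by rw [hA1]

end Matrix

theorem Matrix.isSymm_toEuclideanCLM_symm {ι : Type*} [Fintype ι] [DecidableEq ι]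
    {G : EuclideanSpace ℝ ι →L[ℝ] EuclideanSpace ℝ ι} (hG : IsSelfAdjoint G) :
    ((toEuclideanCLM (𝕜 := ℝ)).symm G).IsSymm :=
  isHermitian_iff_isSymm.mp (hG.map (toEuclideanCLM (𝕜 := ℝ) (n := ι)).symm).isHermitian

theorem ContDiffAt.differentiableAt_fderiv {𝕜 E F : Type*} [NontriviallyNormedField 𝕜]
    [NormedAddCommGroup E] [NormedSpace 𝕜 E] [NormedAddCommGroup F] [NormedSpace 𝕜 F]
    {f : E → F} {x : E} (hf : ContDiffAt 𝕜 2 f x) : DifferentiableAt 𝕜 (fderiv 𝕜 f) x :=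
  (hf.fderiv_right (m := 1) one_add_one_eq_two.le).differentiableAt one_ne_zero

section Gradient

variable {F : Type*} [NormedAddCommGroup F] [InnerProductSpace ℝ F] [CompleteSpace F]
  {H : F → ℝ} {x : F}

theorem hasFDerivAt_gradient_s17 (hH : DifferentiableAt ℝ (fderiv ℝ H) x) :
    HasFDerivAt (gradient H)
      ((toDual ℝ F).symm.toLinearIsometry.toContinuousLinearMap ∘L fderiv ℝ (fderiv ℝ H) x) x :=
  (toDual ℝ F).symm.hasFDerivAt.comp x hH.hasFDerivAt

theorem ContDiffAt.differentiableAt_gradient (hH : ContDiffAt ℝ 2 H x) :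
    DifferentiableAt ℝ (gradient H) x :=
  (hasFDerivAt_gradient_s17 hH.differentiableAt_fderiv).differentiableAt

theorem ContDiffAt.isSelfAdjoint_fderiv_gradient (hH : ContDiffAt ℝ 2 H x) :
    IsSelfAdjoint (fderiv ℝ (gradient H) x) := by
  have hsymm : IsSymmSndFDerivAt ℝ H x :=
    hH.isSymmSndFDerivAt (by simp [minSmoothness_of_isRCLikeNormedField])
  rw [(hasFDerivAt_gradient_s17 hH.differentiableAt_fderiv).fderiv,
    ContinuousLinearMap.isSelfAdjoint_iff_isSymmetric]
  intro v w
  change ⟪(toDual ℝ F).symm _, w⟫_ℝ = ⟪v, (toDual ℝ F).symm _⟫_ℝ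
  rw [← real_inner_comm v, toDual_symm_apply, toDual_symm_apply]
  exact hsymm v w

end Gradient

theorem fderiv_eq_of_implicit_midpoint {E : Type*} [NormedAddCommGroup E] [NormedSpace ℝ E]
    {V Ψ : E → E} {h : ℝ} {y : E} (hV : DifferentiableAt ℝ V ((2 : ℝ)⁻¹ • (y + Ψ y)))
    (hΨ : DifferentiableAt ℝ Ψ y)
    (heq : Ψ =ᶠ[𝓝 y] fun z => z + h • V ((2 : ℝ)⁻¹ • (z + Ψ z))) :
    fderiv ℝ Ψ y =
      1 + h • (fderiv ℝ V ((2 : ℝ)⁻¹ • (y + Ψ y)) * ((2 : ℝ)⁻¹ • (1 + fderiv ℝ Ψ y))) := by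
  have hmid : HasFDerivAt (fun z => (2 : ℝ)⁻¹ • (z + Ψ z))
      ((2 : ℝ)⁻¹ • (1 + fderiv ℝ Ψ y)) y :=
    ((hasFDerivAt_id y).add hΨ.hasFDerivAt).const_smul _
  exact (((hasFDerivAt_id y).add ((hV.hasFDerivAt.comp y hmid).const_smul h)).congr_of_eventuallyEq
    heq).fderiv

theorem jacMatrix_eq_toEuclideanCLM_symm {n : ℕ} (f : Phase n → Phase n) (y : Phase n) :
    jacMatrix f y = (toEuclideanCLM (𝕜 := ℝ)).symm (fderiv ℝ f y) := by
  ext i j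
  simp [jacMatrix, ofPhase, toEuclideanCLM, LinearMap.toMatrix_apply]

theorem sympGrad_eq_comp {n : ℕ} (H : Phase n → ℝ) :
    sympGrad H = toEuclideanCLM (𝕜 := ℝ) (J n)⁻¹ ∘ gradient H :=
  rfl

-- Mathlib's `Matrix.J` uses the opposite sign convention `[[0, -I], [I, 0]]`.
theorem J_eq_neg_matrixJ (n : ℕ) : J n = -Matrix.J (Fin n) ℝ := by
  simp [_root_.J, Matrix.J, fromBlocks_neg]

theorem J_mul_self (n : ℕ) : J n * J n = -1 := by
  rw [J_eq_neg_matrixJ, neg_mul_neg, J_squared]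

theorem transpose_J (n : ℕ) : (J n)ᵀ = -J n := by
  rw [J_eq_neg_matrixJ, transpose_neg, Matrix.J_transpose]

theorem inv_J (n : ℕ) : (J n)⁻¹ = -J n :=
  inv_eq_right_inv (by rw [Matrix.mul_neg, J_mul_self, neg_neg])

theorem isHamiltonian_inv_J_mul {n : ℕ} {S : Matrix (Fin n ⊕ Fin n) (Fin n ⊕ Fin n) ℝ}
    (hS : S.IsSymm) : IsHamiltonian (J n) ((J n)⁻¹ * S) := by
  rw [IsHamiltonian, inv_J, Matrix.neg_mul, transpose_neg, transpose_mul, hS.eq, transpose_J]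
  calc _ = S * (J n * J n) - J n * J n * S := by noncomm_ring
    _ = 0 := by rw [J_mul_self, Matrix.mul_neg, Matrix.neg_mul, Matrix.mul_one, Matrix.one_mul,
      sub_self]

/-- the implicit midpoint rule defines a symplectic map: if `Ψ` is
differentiable on an open `Ω` and satisfies `Ψ(y) = y + h·J⁻¹∇H((y + Ψ(y))/2)` on `Ω`
for a C² Hamiltonian `H`, then `DΨ(y)ᵀ·J·DΨ(y) = J` on `Ω`. -/
theorem stmt17 (n : ℕ) (Ω : Set (Phase n)) (hΩ : IsOpen Ω)
    (H : Phase n → ℝ) (hH : ContDiff ℝ 2 H) (h : ℝ)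
    (Ψ : Phase n → Phase n) (hdiff : ∀ y ∈ Ω, DifferentiableAt ℝ Ψ y)
    (hΨ : ∀ y ∈ Ω, Ψ y = y + h • sympGrad H ((2 : ℝ)⁻¹ • (y + Ψ y))) :
    ∀ y ∈ Ω, (jacMatrix Ψ y)ᵀ * J n * jacMatrix Ψ y = J n := by
  intro y hy
  set m := (2 : ℝ)⁻¹ • (y + Ψ y)
  set G := fderiv ℝ (gradient H) m
  have hV : HasFDerivAt (sympGrad H) (toEuclideanCLM (𝕜 := ℝ) (J n)⁻¹ * G) m := by
    rw [sympGrad_eq_comp]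
    exact (toEuclideanCLM (𝕜 := ℝ) (J n)⁻¹).hasFDerivAt.comp m
      hH.contDiffAt.differentiableAt_gradient.hasFDerivAt
  have hDΨ := fderiv_eq_of_implicit_midpoint hV.differentiableAt (hdiff y hy)
    (Filter.eventually_of_mem (hΩ.mem_nhds hy) hΨ)
  rw [hV.fderiv] at hDΨ
  have hS : ((toEuclideanCLM (𝕜 := ℝ)).symm G).IsSymm :=
    isSymm_toEuclideanCLM_symm hH.contDiffAt.isSelfAdjoint_fderiv_gradient
  apply (isHamiltonian_inv_J_mul (hS.smul (h * 2⁻¹))).transpose_mul_mul_self_of_implicit_midpoint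
  rw [jacMatrix_eq_toEuclideanCLM_symm]
  conv_lhs => rw [hDΨ]
  simp only [map_add, map_smul, map_mul, map_one, StarAlgEquiv.symm_apply_apply,
    Matrix.mul_smul, Matrix.smul_mul, smul_smul]
end
end
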